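/- arXiv:1408.0077 — 7 statements merged into one kernel-verified Lean document; each statement's English description precedes it below -/
import Mathlib

section
/- Let V be the vector field on ℝ⁹ defined by 2ω̇₁=ω₂ω₃+β₃, 2ω̇₂=−ω₁ω₃−α₃, ω̇₃=α₂−β₁, α̇=α×ω, β̇=β×ω. Then the Kovalevskaya-type integral K = (ω₁²−ω₂²+α₁−β₂)² + (2ω₁ω₂+α₂+β₁)² is a first integral: at every point x ∈ ℝ⁹ the directional derivative of K along V(x) is zero. -/
noncomputable section

/-- The Kovalevskaya double-field vector field on `ℝ⁹` with coordinates
`(ω₁,ω₂,ω₃,α₁,α₂,α₃,β₁,β₂,β₃)`: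
`2ω̇₁=ω₂ω₃+β₃, 2ω̇₂=−ω₁ω₃−α₃, ω̇₃=α₂−β₁, α̇=α×ω, β̇=β×ω`. -/
def kovV (x : Fin 9 → ℝ) : Fin 9 → ℝ :=
  ![(x 1 * x 2 + x 8) / 2,
    (-(x 0 * x 2) - x 5) / 2,
    x 4 - x 6,
    x 4 * x 2 - x 5 * x 1,
    x 5 * x 0 - x 3 * x 2,
    x 3 * x 1 - x 4 * x 0,
    x 7 * x 2 - x 8 * x 1,
    x 8 * x 0 - x 6 * x 2,
    x 6 * x 1 - x 7 * x 0]

/-- The Kovalevskaya-type integral `K = (ω₁²−ω₂²+α₁−β₂)² + (2ω₁ω₂+α₂+β₁)²`. -/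
def kovK (x : Fin 9 → ℝ) : ℝ :=
  ((x 0)^2 - (x 1)^2 + x 3 - x 7)^2 + (2 * x 0 * x 1 + x 4 + x 6)^2

/-- the Kovalevskaya-type integral `K` is a first integral. -/
theorem K_first_integral (x : Fin 9 → ℝ) :
    fderiv ℝ kovK x (kovV x) = 0 := by
  have hp : ∀ i : Fin 9, HasFDerivAt (fun y : Fin 9 → ℝ => y i)
      (ContinuousLinearMap.proj (R := ℝ) (φ := fun _ : Fin 9 => ℝ) i) x := fun i => by
    exact (ContinuousLinearMap.proj (R := ℝ) (φ := fun _ : Fin 9 => ℝ) i).hasFDerivAt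
  have hA := (((((hp 0).mul (hp 0)).sub ((hp 1).mul (hp 1))).add (hp 3)).sub (hp 7))
  have hB := (((((hp 0).const_mul 2).mul (hp 1)).add (hp 4)).add (hp 6))
  have hK := (hA.mul hA).add (hB.mul hB)
  have hkov : kovK = (fun y : Fin 9 → ℝ =>
      (y 0 * y 0 - y 1 * y 1 + y 3 - y 7) * (y 0 * y 0 - y 1 * y 1 + y 3 - y 7) +
      (2 * y 0 * y 1 + y 4 + y 6) * (2 * y 0 * y 1 + y 4 + y 6)) := by
    funext y; simp only [kovK]; ring
  have hK' : HasFDerivAt (fun y : Fin 9 → ℝ =>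
      (y 0 * y 0 - y 1 * y 1 + y 3 - y 7) * (y 0 * y 0 - y 1 * y 1 + y 3 - y 7) +
      (2 * y 0 * y 1 + y 4 + y 6) * (2 * y 0 * y 1 + y 4 + y 6)) _ x := hK
  rw [hkov, hK'.fderiv]
  have hv0 : kovV x 0 = (x 1 * x 2 + x 8) / 2 := rfl
  have hv1 : kovV x 1 = (-(x 0 * x 2) - x 5) / 2 := rfl
  have hv3 : kovV x 3 = x 4 * x 2 - x 5 * x 1 := rfl
  have hv4 : kovV x 4 = x 5 * x 0 - x 3 * x 2 := rfl
  have hv6 : kovV x 6 = x 7 * x 2 - x 8 * x 1 := rfl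
  have hv7 : kovV x 7 = x 8 * x 0 - x 6 * x 2 := rfl
  simp only [ContinuousLinearMap.add_apply, ContinuousLinearMap.smul_apply,
    ContinuousLinearMap.sub_apply, ContinuousLinearMap.coe_smul',
    Pi.smul_apply, ContinuousLinearMap.proj_apply, smul_eq_mul,
    Pi.mul_apply, Pi.sub_apply, Pi.add_apply,
    hv0, hv1, hv3, hv4, hv6, hv7]
  ring
end
end

section
/- Let a > b > 0 and let V be the vector field on ℝ⁹ defined by 2ω̇₁=ω₂ω₃+β₃, 2ω̇₂=−ω₁ω₃−α₃, ω̇₃=α₂−β₁, α̇=α×ω, β̇=β×ω. Then at every point x of the constraint set P⁶ = {|α|²=a², |β|²=b², α·β=0}, the directional derivative of the function G = (ω₁α₁+ω₂α₂+½α₃ω₃)² + (ω₁β₁+ω₂β₂+½β₃ω₃)² + ω₃[(α₂β₃−α₃β₂)ω₁+(α₃β₁−α₁β₃)ω₂+½(α₁β₂−α₂β₁)ω₃] − α₁b² − β₂a² along V(x) is zero; i.e. G is a first integral on P⁶. -/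
noncomputable section

/-- The integral `G` of the Kovalevskaya top in a double field. -/
def kovG (a b : ℝ) (x : Fin 9 → ℝ) : ℝ :=
  (x 0 * x 3 + x 1 * x 4 + x 5 * x 2 / 2)^2
  + (x 0 * x 6 + x 1 * x 7 + x 8 * x 2 / 2)^2
  + x 2 * ((x 4 * x 8 - x 5 * x 7) * x 0 + (x 5 * x 6 - x 3 * x 8) * x 1
      + (x 3 * x 7 - x 4 * x 6) * x 2 / 2)
  - x 3 * b^2 - x 7 * a^2

/-- on the constraint set `P⁶ = {|α|²=a², |β|²=b², α·β=0}`, the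
function `G` is a first integral of the Kovalevskaya double-field system. -/
theorem G_first_integral (a b : ℝ) (hb : 0 < b) (hab : b < a) (x : Fin 9 → ℝ)
    (h1 : (x 3)^2 + (x 4)^2 + (x 5)^2 = a^2)
    (h2 : (x 6)^2 + (x 7)^2 + (x 8)^2 = b^2)
    (h3 : x 3 * x 6 + x 4 * x 7 + x 5 * x 8 = 0) :
    fderiv ℝ (kovG a b) x (kovV x) = 0 := by
  have h : ∀ i : Fin 9, HasFDerivAt (fun y : Fin 9 → ℝ => y i)
      (ContinuousLinearMap.proj (R := ℝ) (φ := fun _ : Fin 9 => ℝ) i) x :=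
    fun i => hasFDerivAt_apply i x
  have hA := (((h 0).mul (h 3)).add ((h 1).mul (h 4))).add
    (((h 5).mul (h 2)).mul_const ((2:ℝ)⁻¹))
  have hB := (((h 0).mul (h 6)).add ((h 1).mul (h 7))).add
    (((h 8).mul (h 2)).mul_const ((2:ℝ)⁻¹))
  have hC := (h 2).mul
    (((((h 4).mul (h 8)).sub ((h 5).mul (h 7))).mul (h 0)).add
      (((((h 5).mul (h 6)).sub ((h 3).mul (h 8))).mul (h 1)).add
        (((((h 3).mul (h 7)).sub ((h 4).mul (h 6))).mul (h 2)).mul_const ((2:ℝ)⁻¹))))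
  have H := ((((hA.mul hA).add (hB.mul hB)).add hC).sub ((h 3).mul_const (b^2))).sub
    ((h 7).mul_const (a^2))
  have hfun : kovG a b = (fun y : Fin 9 → ℝ =>
      ((y 0 * y 3 + y 1 * y 4 + y 5 * y 2 * (2:ℝ)⁻¹) * (y 0 * y 3 + y 1 * y 4 + y 5 * y 2 * (2:ℝ)⁻¹))
      + ((y 0 * y 6 + y 1 * y 7 + y 8 * y 2 * (2:ℝ)⁻¹) * (y 0 * y 6 + y 1 * y 7 + y 8 * y 2 * (2:ℝ)⁻¹))
      + y 2 * ((y 4 * y 8 - y 5 * y 7) * y 0 + ((y 5 * y 6 - y 3 * y 8) * y 1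
          + (y 3 * y 7 - y 4 * y 6) * y 2 * (2:ℝ)⁻¹))
      - y 3 * b^2 - y 7 * a^2) := by
    funext y; simp only [kovG]; ring
  rw [hfun]
  erw [H.fderiv]
  simp only [ContinuousLinearMap.add_apply, ContinuousLinearMap.sub_apply,
    ContinuousLinearMap.smul_apply, ContinuousLinearMap.coe_smul', Pi.smul_apply,
    smul_eq_mul, ContinuousLinearMap.proj_apply, ContinuousLinearMap.coe_sub',
    Pi.sub_apply, ContinuousLinearMap.coe_add', Pi.add_apply, Pi.mul_apply]
  simp only [show kovV x 0 = (x 1 * x 2 + x 8) / 2 from rfl,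
    show kovV x 1 = (-(x 0 * x 2) - x 5) / 2 from rfl,
    show kovV x 2 = x 4 - x 6 from rfl,
    show kovV x 3 = x 4 * x 2 - x 5 * x 1 from rfl,
    show kovV x 4 = x 5 * x 0 - x 3 * x 2 from rfl,
    show kovV x 5 = x 3 * x 1 - x 4 * x 0 from rfl,
    show kovV x 6 = x 7 * x 2 - x 8 * x 1 from rfl,
    show kovV x 7 = x 8 * x 0 - x 6 * x 2 from rfl,
    show kovV x 8 = x 6 * x 1 - x 7 * x 0 from rfl]
  linear_combination (x 0 * x 8 - x 2 * x 6) * h1 + (x 2 * x 4 - x 1 * x 5) * h2 +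
    (x 3 * x 2 - x 7 * x 2 + x 1 * x 8 - x 0 * x 5) * h3
end
end

section
/- Let a > b > 0 and let V be the vector field on ℝ⁹ defined by 2ω̇₁=ω₂ω₃+β₃, 2ω̇₂=−ω₁ω₃−α₃, ω̇₃=α₂−β₁, α̇=α×ω, β̇=β×ω. Then a point x of the constraint set P⁶ = {|α|²=a², |β|²=b², α·β=0} satisfies V(x)=0 if and only if x is one of the four points c₀ = (ω=0, α=(a,0,0), β=(0,b,0)), c₁ = (ω=0, α=(a,0,0), β=(0,−b,0)), c₂ = (ω=0, α=(−a,0,0), β=(0,b,0)), c₃ = (ω=0, α=(−a,0,0), β=(0,−b,0)). -/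
noncomputable section

lemma vec9_ext (x : Fin 9 → ℝ) (v0 v1 v2 v3 v4 v5 v6 v7 v8 : ℝ)
    (h0 : x 0 = v0) (h1 : x 1 = v1) (h2 : x 2 = v2) (h3 : x 3 = v3)
    (h4 : x 4 = v4) (h5 : x 5 = v5) (h6 : x 6 = v6) (h7 : x 7 = v7)
    (h8 : x 8 = v8) : x = ![v0, v1, v2, v3, v4, v5, v6, v7, v8] := by
  funext i; fin_cases i <;> assumption

/-- on `P⁶` the vector field vanishes exactly at the four
equilibria `c₀, c₁, c₂, c₃`. -/
theorem equilibria_classification (a b : ℝ) (hb : 0 < b) (hab : b < a)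
    (x : Fin 9 → ℝ)
    (h1 : (x 3)^2 + (x 4)^2 + (x 5)^2 = a^2)
    (h2 : (x 6)^2 + (x 7)^2 + (x 8)^2 = b^2)
    (h3 : x 3 * x 6 + x 4 * x 7 + x 5 * x 8 = 0) :
    kovV x = 0 ↔
      x = ![0, 0, 0, a, 0, 0, 0, b, 0] ∨
      x = ![0, 0, 0, a, 0, 0, 0, -b, 0] ∨
      x = ![0, 0, 0, -a, 0, 0, 0, b, 0] ∨
      x = ![0, 0, 0, -a, 0, 0, 0, -b, 0] := by
  have ha : 0 < a := hb.trans hab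
  constructor
  · intro h
    have e0 : (x 1 * x 2 + x 8) / 2 = (0:ℝ) := congrFun h 0
    have e1 : (-(x 0 * x 2) - x 5) / 2 = (0:ℝ) := congrFun h 1
    have e2 : x 4 - x 6 = (0:ℝ) := congrFun h 2
    have e3 : x 4 * x 2 - x 5 * x 1 = (0:ℝ) := congrFun h 3
    have e4 : x 5 * x 0 - x 3 * x 2 = (0:ℝ) := congrFun h 4
    have e5 : x 3 * x 1 - x 4 * x 0 = (0:ℝ) := congrFun h 5
    have e6 : x 7 * x 2 - x 8 * x 1 = (0:ℝ) := congrFun h 6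
    have e7 : x 8 * x 0 - x 6 * x 2 = (0:ℝ) := congrFun h 7
    have e8 : x 6 * x 1 - x 7 * x 0 = (0:ℝ) := congrFun h 8
    clear h
    -- Lagrange identities force ω = 0
    have hu : (x 3 * x 0 + x 4 * x 1 + x 5 * x 2)^2
        = a^2 * (x 0^2 + x 1^2 + x 2^2) := by
      linear_combination (x 0^2 + x 1^2 + x 2^2) * h1
        - (x 4 * x 2 - x 5 * x 1) * e3 - (x 5 * x 0 - x 3 * x 2) * e4
        - (x 3 * x 1 - x 4 * x 0) * e5
    have hv : (x 6 * x 0 + x 7 * x 1 + x 8 * x 2)^2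
        = b^2 * (x 0^2 + x 1^2 + x 2^2) := by
      linear_combination (x 0^2 + x 1^2 + x 2^2) * h2
        - (x 7 * x 2 - x 8 * x 1) * e6 - (x 8 * x 0 - x 6 * x 2) * e7
        - (x 6 * x 1 - x 7 * x 0) * e8
    have huv : (x 3 * x 0 + x 4 * x 1 + x 5 * x 2)
        * (x 6 * x 0 + x 7 * x 1 + x 8 * x 2) = 0 := by
      linear_combination (x 0^2 + x 1^2 + x 2^2) * h3
        - (x 7 * x 2 - x 8 * x 1) * e3 - (x 8 * x 0 - x 6 * x 2) * e4
        - (x 6 * x 1 - x 7 * x 0) * e5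
    have hprod : a^2 * b^2 * (x 0^2 + x 1^2 + x 2^2)^2 = 0 := by
      calc a^2 * b^2 * (x 0^2 + x 1^2 + x 2^2)^2
          = (x 3 * x 0 + x 4 * x 1 + x 5 * x 2)^2
            * (x 6 * x 0 + x 7 * x 1 + x 8 * x 2)^2 := by
            rw [hu, hv]; ring
        _ = ((x 3 * x 0 + x 4 * x 1 + x 5 * x 2)
            * (x 6 * x 0 + x 7 * x 1 + x 8 * x 2))^2 := by ring
        _ = 0 := by rw [huv]; ring
    have hne : a^2 * b^2 ≠ 0 := by positivity
    have hS2 : (x 0^2 + x 1^2 + x 2^2)^2 = 0 :=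
      (mul_eq_zero.mp hprod).resolve_left hne
    have hS : x 0^2 + x 1^2 + x 2^2 = 0 := by
      exact pow_eq_zero_iff (two_ne_zero) |>.mp hS2
    have hx0 : x 0 = 0 := by
      have h0sq : x 0 ^ 2 = 0 :=
        le_antisymm (by linarith [sq_nonneg (x 1), sq_nonneg (x 2)]) (sq_nonneg _)
      exact pow_eq_zero_iff two_ne_zero |>.mp h0sq
    have hx1 : x 1 = 0 := by
      have h1sq : x 1 ^ 2 = 0 :=
        le_antisymm (by linarith [sq_nonneg (x 0), sq_nonneg (x 2)]) (sq_nonneg _)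
      exact pow_eq_zero_iff two_ne_zero |>.mp h1sq
    have hx2 : x 2 = 0 := by
      have h2sq : x 2 ^ 2 = 0 :=
        le_antisymm (by linarith [sq_nonneg (x 0), sq_nonneg (x 1)]) (sq_nonneg _)
      exact pow_eq_zero_iff two_ne_zero |>.mp h2sq
    have hx8 : x 8 = 0 := by linear_combination 2 * e0 - x 2 * hx1
    have hx5 : x 5 = 0 := by linear_combination -2 * e1 - x 2 * hx0
    have hx46 : x 4 = x 6 := by linear_combination e2
    have hsplit : x 6 * (x 3 + x 7) = 0 := by
      linear_combination h3 - x 7 * hx46 - x 8 * hx5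
    rcases mul_eq_zero.mp hsplit with h6 | h37
    · have hx4 : x 4 = 0 := hx46.trans h6
      have h3a : (x 3 - a) * (x 3 + a) = 0 := by
        linear_combination h1 - x 4 * hx4 - x 5 * hx5
      have h7b : (x 7 - b) * (x 7 + b) = 0 := by
        linear_combination h2 - x 6 * h6 - x 8 * hx8
      rcases mul_eq_zero.mp h3a with h3a | h3a <;>
        rcases mul_eq_zero.mp h7b with h7b | h7b
      · left
        exact vec9_ext x _ _ _ _ _ _ _ _ _ hx0 hx1 hx2 (by linarith) hx4 hx5 h6
          (by linarith) hx8
      · right; left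
        exact vec9_ext x _ _ _ _ _ _ _ _ _ hx0 hx1 hx2 (by linarith) hx4 hx5 h6
          (by linarith) hx8
      · right; right; left
        exact vec9_ext x _ _ _ _ _ _ _ _ _ hx0 hx1 hx2 (by linarith) hx4 hx5 h6
          (by linarith) hx8
      · right; right; right
        exact vec9_ext x _ _ _ _ _ _ _ _ _ hx0 hx1 hx2 (by linarith) hx4 hx5 h6
          (by linarith) hx8
    · exfalso
      have hba : b^2 = a^2 := by
        linear_combination h1 - h2 + (x 7 - x 3) * h37 - x 5 * hx5 + x 8 * hx8
          - (x 4 + x 6) * hx46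
      have hlt : b^2 < a^2 := pow_lt_pow_left₀ hab hb.le two_ne_zero
      linarith
  · rintro (rfl | rfl | rfl | rfl) <;>
      · funext i; fin_cases i <;> (try simp [kovV]) <;> rfl

end
end

section
/- Let a > b > 0, let ε ∈ {+1,−1}, and let θ: ℝ → ℝ be a twice differentiable function satisfying the pendulum equation 2θ̈ = −b sin θ. Then the curve t ↦ (ω(t),α(t),β(t)) with ω(t) = (θ̇(t),0,0), α(t) = (εa,0,0), β(t) = (0, b cos θ(t), −b sin θ(t)) is a solution of the system 2ω̇₁=ω₂ω₃+β₃, 2ω̇₂=−ω₁ω₃−α₃, ω̇₃=α₂−β₁, α̇=α×ω, β̇=β×ω on ℝ⁹ (these are the pendulum families 𝓛₁ (ε=+1) and 𝓛₂ (ε=−1)). -/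
noncomputable section

/-- The curve of the pendulum families `𝓛₁` (ε=+1), `𝓛₂` (ε=−1). -/
def curveL12 (a b ε : ℝ) (θ θ' : ℝ → ℝ) (s : ℝ) : Fin 9 → ℝ :=
  ![θ' s, 0, 0, ε * a, 0, 0, 0, b * Real.cos (θ s), -(b * Real.sin (θ s))]

/-- the pendulum families `𝓛₁, 𝓛₂` are solutions of the system. -/
theorem pendulum_L12 (a b : ℝ) (hb : 0 < b) (hab : b < a)
    (ε : ℝ) (hε : ε = 1 ∨ ε = -1)
    (θ θ' θ'' : ℝ → ℝ)
    (hd1 : ∀ t, HasDerivAt θ (θ' t) t)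
    (hd2 : ∀ t, HasDerivAt θ' (θ'' t) t)
    (hpend : ∀ t, 2 * θ'' t = -(b * Real.sin (θ t))) :
    ∀ (t : ℝ) (i : Fin 9),
      HasDerivAt (fun s => curveL12 a b ε θ θ' s i)
        (kovV (curveL12 a b ε θ θ' t) i) t := by
  intro t i
  have hθ := hd1 t
  have hθ' := hd2 t
  fin_cases i
  · show HasDerivAt (fun s => θ' s) ((0 * 0 + -(b * Real.sin (θ t))) / 2) t
    have h : (0 * 0 + -(b * Real.sin (θ t))) / 2 = θ'' t := by have := hpend t; linarith
    rw [h]; exact hθ'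
  · show HasDerivAt (fun _ : ℝ => (0:ℝ)) ((-(θ' t * 0) - 0) / 2) t
    simpa using hasDerivAt_const t (0:ℝ)
  · show HasDerivAt (fun _ : ℝ => (0:ℝ)) (0 - 0) t
    simpa using hasDerivAt_const t (0:ℝ)
  · show HasDerivAt (fun _ : ℝ => ε * a) (0 * 0 - 0 * 0) t
    simpa using hasDerivAt_const t (ε * a)
  · show HasDerivAt (fun _ : ℝ => (0:ℝ)) (0 * θ' t - ε * a * 0) t
    simpa using hasDerivAt_const t (0:ℝ)
  · show HasDerivAt (fun _ : ℝ => (0:ℝ)) (ε * a * 0 - 0 * θ' t) t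
    simpa using hasDerivAt_const t (0:ℝ)
  · show HasDerivAt (fun _ : ℝ => (0:ℝ))
      (b * Real.cos (θ t) * 0 - -(b * Real.sin (θ t)) * 0) t
    simpa using hasDerivAt_const t (0:ℝ)
  · show HasDerivAt (fun s => b * Real.cos (θ s))
      (-(b * Real.sin (θ t)) * θ' t - 0 * 0) t
    have := ((Real.hasDerivAt_cos (θ t)).comp t hθ).const_mul b
    exact this.congr_deriv (by ring)
  · show HasDerivAt (fun s => -(b * Real.sin (θ s)))
      (0 * 0 - b * Real.cos (θ t) * θ' t) t
    have := (((Real.hasDerivAt_sin (θ t)).comp t hθ).const_mul b).neg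
    exact this.congr_deriv (by ring)
end
end

section
/- Let a > b > 0, let ε ∈ {+1,−1}, and let θ: ℝ → ℝ be a twice differentiable function satisfying the pendulum equation θ̈ = −(a+εb) sin θ. Then the curve t ↦ (ω(t),α(t),β(t)) with ω(t) = (0,0,θ̇(t)), α(t) = (a cos θ(t), −a sin θ(t), 0), β(t) = (εb sin θ(t), εb cos θ(t), 0) is a solution of the system 2ω̇₁=ω₂ω₃+β₃, 2ω̇₂=−ω₁ω₃−α₃, ω̇₃=α₂−β₁, α̇=α×ω, β̇=β×ω on ℝ⁹ (these are the pendulum families 𝓛₅ (ε=+1) and 𝓛₆ (ε=−1)). -/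
noncomputable section

/-- The curve of the pendulum families `𝓛₅` (ε=+1), `𝓛₆` (ε=−1). -/
def curveL56 (a b ε : ℝ) (θ θ' : ℝ → ℝ) (s : ℝ) : Fin 9 → ℝ :=
  ![0, 0, θ' s, a * Real.cos (θ s), -(a * Real.sin (θ s)), 0,
    ε * b * Real.sin (θ s), ε * b * Real.cos (θ s), 0]

private lemma c9_5 {α : Type*} (x0 x1 x2 x3 x4 x5 x6 x7 x8 : α) :
    ![x0,x1,x2,x3,x4,x5,x6,x7,x8] (5:Fin 9) = x5 := rfl
private lemma c9_6 {α : Type*} (x0 x1 x2 x3 x4 x5 x6 x7 x8 : α) :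
    ![x0,x1,x2,x3,x4,x5,x6,x7,x8] (6:Fin 9) = x6 := rfl
private lemma c9_7 {α : Type*} (x0 x1 x2 x3 x4 x5 x6 x7 x8 : α) :
    ![x0,x1,x2,x3,x4,x5,x6,x7,x8] (7:Fin 9) = x7 := rfl
private lemma c9_8 {α : Type*} (x0 x1 x2 x3 x4 x5 x6 x7 x8 : α) :
    ![x0,x1,x2,x3,x4,x5,x6,x7,x8] (8:Fin 9) = x8 := rfl

/-- the pendulum families `𝓛₅, 𝓛₆` are solutions of the system. -/
theorem pendulum_L56 (a b : ℝ) (hb : 0 < b) (hab : b < a)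
    (ε : ℝ) (hε : ε = 1 ∨ ε = -1)
    (θ θ' θ'' : ℝ → ℝ)
    (hd1 : ∀ t, HasDerivAt θ (θ' t) t)
    (hd2 : ∀ t, HasDerivAt θ' (θ'' t) t)
    (hpend : ∀ t, θ'' t = -((a + ε * b) * Real.sin (θ t))) :
    ∀ (t : ℝ) (i : Fin 9),
      HasDerivAt (fun s => curveL56 a b ε θ θ' s i)
        (kovV (curveL56 a b ε θ θ' t) i) t := by
  intro t i
  have hc : HasDerivAt (fun s => Real.cos (θ s)) (-Real.sin (θ t) * θ' t) t := (hd1 t).cos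
  have hs : HasDerivAt (fun s => Real.sin (θ s)) (Real.cos (θ t) * θ' t) t := (hd1 t).sin
  have h2 : HasDerivAt θ' (-((a + ε * b) * Real.sin (θ t))) t := by
    have := hd2 t; rwa [hpend t] at this
  fin_cases i
  · convert hasDerivAt_const t (0:ℝ) using 1 <;> (try rfl) <;> simp [curveL56, kovV, c9_5, c9_6, c9_7, c9_8]
  · convert hasDerivAt_const t (0:ℝ) using 1 <;> (try rfl) <;> simp [curveL56, kovV, c9_5, c9_6, c9_7, c9_8]
  · convert h2 using 1 <;> (try rfl) <;> simp [curveL56, kovV, c9_5, c9_6, c9_7, c9_8] <;> ring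
  · convert hc.const_mul a using 1 <;> (try rfl) <;> simp [curveL56, kovV, c9_5, c9_6, c9_7, c9_8] <;> ring
  · convert (hs.const_mul a).neg using 1 <;> (try rfl) <;> simp [curveL56, kovV, c9_5, c9_6, c9_7, c9_8] <;> ring
  · convert hasDerivAt_const t (0:ℝ) using 1 <;> (try rfl) <;> simp [curveL56, kovV, c9_5, c9_6, c9_7, c9_8]
  · convert hs.const_mul (ε * b) using 1 <;> (try rfl) <;> simp [curveL56, kovV, c9_5, c9_6, c9_7, c9_8] <;> ring
  · convert hc.const_mul (ε * b) using 1 <;> (try rfl) <;> simp [curveL56, kovV, c9_5, c9_6, c9_7, c9_8] <;> ring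
  · convert hasDerivAt_const t (0:ℝ) using 1 <;> (try rfl) <;> simp [curveL56, kovV, c9_5, c9_6, c9_7, c9_8]
end
end

section
/- Let a > b > 0 and let h ∈ ℝ satisfy h² < 4ab. Then the quartic polynomial 4μ⁴ − 2abh(a−b)²μ² + a³b³(a−b)⁴ (the non-trivial factor of the characteristic polynomial at points of the family 𝓛₅) has four complex roots, and none of them is real or purely imaginary; equivalently, every root μ ∈ ℂ has Re μ ≠ 0 and Im μ ≠ 0. (This is the focus-focus regime: the corresponding critical circles of 𝓛₅ with −2√(ab) < h < 2√(ab) are nondegenerate singularities of focus type.) -/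
noncomputable section
open Polynomial

lemma focus_quad_real (a b h r : ℝ) (hb : 0 < b) (hab : b < a)
    (hh : h^2 < 4 * a * b) :
    4 * r^2 - 2*a*b*h*(a-b)^2 * r + a^3*b^3*(a-b)^4 ≠ 0 := by
  have hab' : 0 < a - b := by linarith
  have h5 : 0 < (a*b*(a-b)^2)^2 * (4*a*b - h^2) := by
    have h4 : 0 < 4*a*b - h^2 := by linarith
    have ha : 0 < a := lt_trans hb hab
    exact mul_pos (pow_pos (mul_pos (mul_pos ha hb) (pow_pos hab' 2)) 2) h4
  intro hr
  nlinarith [sq_nonneg (4*r - a*b*h*(a-b)^2), h5]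

/-- for `a > b > 0` and `h² < 4ab`, the quartic
`4μ⁴ − 2abh(a−b)²μ² + a³b³(a−b)⁴` has four complex roots (with multiplicity),
and every root has nonzero real part and nonzero imaginary part (focus-focus
regime on the family `𝓛₅`). -/
theorem focus_quartic_roots (a b h : ℝ) (hb : 0 < b) (hab : b < a)
    (hh : h^2 < 4 * a * b) :
    ((C (4 : ℂ) * X^4 - C (2 * (a : ℂ) * (b : ℂ) * (h : ℂ) * ((a : ℂ) - (b : ℂ))^2) * X^2
        + C ((a : ℂ)^3 * (b : ℂ)^3 * ((a : ℂ) - (b : ℂ))^4)).roots.card = 4) ∧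
    (∀ μ : ℂ,
      4 * μ^4 - 2 * (a : ℂ) * (b : ℂ) * (h : ℂ) * ((a : ℂ) - (b : ℂ))^2 * μ^2
        + (a : ℂ)^3 * (b : ℂ)^3 * ((a : ℂ) - (b : ℂ))^4 = 0 →
      μ.re ≠ 0 ∧ μ.im ≠ 0) := by
  constructor
  · set p : ℂ[X] := C (4 : ℂ) * X^4 - C (2 * (a : ℂ) * (b : ℂ) * (h : ℂ) * ((a : ℂ) - (b : ℂ))^2) * X^2
        + C ((a : ℂ)^3 * (b : ℂ)^3 * ((a : ℂ) - (b : ℂ))^4) with hp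
    have hdeg : p.natDegree = 4 := by
      rw [hp]
      compute_degree!
    rw [← hdeg]
    exact (Polynomial.splits_iff_card_roots).mp (IsAlgClosed.splits p)
  · intro μ hμ
    -- the imaginary part of μ² is nonzero
    have key : (μ^2).im ≠ 0 := by
      intro hy
      have hν : μ^2 = ((μ^2).re : ℂ) := by
        exact (Complex.re_add_im (μ^2)).symm.trans (by rw [hy]; simp)
      set r : ℝ := (μ^2).re
      have heq : ((4 * r^2 - 2*a*b*h*(a-b)^2 * r + a^3*b^3*(a-b)^4 : ℝ) : ℂ) = 0 := by
        push_cast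
        rw [← hμ]
        rw [show μ^4 = (μ^2)^2 by ring, hν]
        try ring
      exact focus_quad_real a b h r hb hab hh (by exact_mod_cast heq)
    have him : (μ^2).im = 2 * μ.re * μ.im := by
      rw [sq, Complex.mul_im]; ring
    rw [him] at key
    exact ⟨fun h0 => key (by simp [h0]), fun h0 => key (by simp [h0])⟩

end
end

section
/- Let a > b > 0. Then the equation 2s²√((s² − a²)(s² − b²)) = s⁴ − a²b² has exactly one solution s with s > a; equivalently, the polynomial 3s⁸ − 4(a² + b²)s⁶ + 6a²b²s⁴ − a⁴b⁴ has exactly one root on the half-line s > a. (This root s₀ marks the cusp value separating saddle-type from center-type critical circles on the branch δ₃ of the bifurcation diagram.) -/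
noncomputable section

/-- for `a > b > 0` the equation
`2s²√((s²−a²)(s²−b²)) = s⁴ − a²b²` has exactly one solution `s > a`;
equivalently, `3s⁸ − 4(a²+b²)s⁶ + 6a²b²s⁴ − a⁴b⁴` has exactly one root `s > a`. -/
theorem unique_cusp_root (a b : ℝ) (hb : 0 < b) (hab : b < a) :
    (∃! s : ℝ, a < s ∧
      2 * s^2 * Real.sqrt ((s^2 - a^2) * (s^2 - b^2)) = s^4 - a^2 * b^2) ∧
    (∃! s : ℝ, a < s ∧
      3 * s^8 - 4 * (a^2 + b^2) * s^6 + 6 * a^2 * b^2 * s^4 - a^4 * b^4 = 0) := by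
  have ha : 0 < a := hb.trans hab
  set f : ℝ → ℝ := fun s => 3 * s^8 - 4 * (a^2 + b^2) * s^6 + 6 * a^2 * b^2 * s^4 - a^4 * b^4
    with hf
  have hd : ∀ s : ℝ, HasDerivAt f
      (24 * s^7 - 24 * (a^2 + b^2) * s^5 + 24 * (a^2 * b^2) * s^3) s := by
    intro s
    have h8 := (hasDerivAt_pow 8 s).const_mul (3 : ℝ)
    have h6 := (hasDerivAt_pow 6 s).const_mul (4 * (a^2 + b^2))
    have h4 := (hasDerivAt_pow 4 s).const_mul (6 * a^2 * b^2)
    have := ((h8.sub h6).add h4).sub_const (a^4 * b^4)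
    refine this.congr_deriv ?_
    push_cast
    ring
  have hcont : Continuous f := by
    rw [hf]; continuity
  have hmono : StrictMonoOn f (Set.Ici a) := by
    apply strictMonoOn_of_deriv_pos (convex_Ici a) hcont.continuousOn
    intro x hx
    rw [interior_Ici] at hx
    rw [(hd x).deriv]
    have hxa : a < x := hx
    have hx0 : 0 < x := ha.trans hxa
    have h1 : 0 < x^2 - a^2 := by nlinarith
    have h2 : 0 < x^2 - b^2 := by nlinarith
    have h3 : 0 < x^3 := by positivity
    nlinarith [mul_pos (mul_pos h3 h1) h2]
  have hfa : f a < 0 := by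
    have hd2 : 0 < a^2 - b^2 := by nlinarith
    have : 0 < a^4 * (a^2 - b^2)^2 := mul_pos (pow_pos ha 4) (pow_pos hd2 2)
    simp only [hf]; nlinarith
  have hf2a : 0 < f (2 * a) := by
    have hb2 : b^2 ≤ a^2 := by nlinarith
    have h1' : a^6 * b^2 ≤ a^6 * a^2 := mul_le_mul_of_nonneg_left hb2 (by positivity)
    have hb4 : b^4 ≤ a^4 := by nlinarith
    have h2' : a^4 * b^4 ≤ a^4 * a^4 := mul_le_mul_of_nonneg_left hb4 (by positivity)
    simp only [hf]; nlinarith [pow_pos ha 8, h1', h2']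
  obtain ⟨c, hc, hfc⟩ := intermediate_value_Ioo (by linarith : a ≤ 2 * a) hcont.continuousOn
    (Set.mem_Ioo.mpr ⟨hfa, hf2a⟩)
  have hpoly : ∃! s : ℝ, a < s ∧ f s = 0 := by
    refine ⟨c, ⟨hc.1, hfc⟩, ?_⟩
    rintro y ⟨hy, hy0⟩
    exact hmono.injOn (le_of_lt hy) (le_of_lt hc.1) (by rw [hy0, hfc])
  have hequiv : ∀ s : ℝ, a < s →
      ((2 * s^2 * Real.sqrt ((s^2 - a^2) * (s^2 - b^2)) = s^4 - a^2 * b^2) ↔ f s = 0) := by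
    intro s hs
    have hs0 : 0 < s := ha.trans hs
    have h1 : 0 < s^2 - a^2 := by nlinarith
    have h2 : 0 < s^2 - b^2 := by nlinarith
    have hX : 0 ≤ (s^2 - a^2) * (s^2 - b^2) := le_of_lt (mul_pos h1 h2)
    have hsq : Real.sqrt ((s^2 - a^2) * (s^2 - b^2)) ^ 2 = (s^2 - a^2) * (s^2 - b^2) :=
      Real.sq_sqrt hX
    constructor
    · intro h
      have h2' : (2 * s^2 * Real.sqrt ((s^2 - a^2) * (s^2 - b^2)))^2 = (s^4 - a^2 * b^2)^2 := by
        rw [h]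
      simp only [hf]
      linear_combination h2' - 4 * s^4 * hsq
    · intro h
      simp only [hf] at h
      have hr : 0 < s^4 - a^2 * b^2 := by nlinarith
      have hl : 0 ≤ 2 * s^2 * Real.sqrt ((s^2 - a^2) * (s^2 - b^2)) := by positivity
      have heq2 : (2 * s^2 * Real.sqrt ((s^2 - a^2) * (s^2 - b^2)) - (s^4 - a^2 * b^2)) *
          (2 * s^2 * Real.sqrt ((s^2 - a^2) * (s^2 - b^2)) + (s^4 - a^2 * b^2)) = 0 := by
        linear_combination 4 * s^4 * hsq + h
      rcases mul_eq_zero.mp heq2 with h' | h'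
      · linarith [sub_eq_zero.mp h']
      · linarith
  constructor
  · obtain ⟨s, ⟨hs, hs0⟩, hu⟩ := hpoly
    exact ⟨s, ⟨hs, (hequiv s hs).mpr hs0⟩, fun y ⟨hy, hy0⟩ => hu y ⟨hy, (hequiv y hy).mp hy0⟩⟩
  · exact hpoly
end
end
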